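/- arXiv:0905.4147 — 7 statements merged into one kernel-verified Lean document; each statement's English description precedes it below -/
import Mathlib

section
/- For any set X of vertices and any ε with 0 ≤ ε ≤ 1, setting t = |T_ε(X)|, the set T_ε(X) is an (nε/t)-near clique; that is, the number of ordered pairs (u,v) of distinct vertices of T_ε(X) with {u,v} an edge is at least (1 − nε/t)·t·(t−1). -/
open Finset
open scoped Classical

/-- `Knear G α X` = set of vertices adjacent to all but an `α` fraction of `X`. -/
noncomputable def Knear {V : Type*} [Fintype V] (G : SimpleGraph V) (α : ℝ)
    (X : Finset V) : Finset V :=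
  Finset.univ.filter fun v =>
    (1 - α) * (X.card : ℝ) ≤ ((X.filter fun u => G.Adj v u).card : ℝ)

/-- `Tnear G ε X = K_ε(K_{2ε²}(X)) ∩ K_{2ε²}(X)`. -/
noncomputable def Tnear {V : Type*} [Fintype V] (G : SimpleGraph V) (ε : ℝ)
    (X : Finset V) : Finset V :=
  Knear G ε (Knear G (2 * ε ^ 2) X) ∩ Knear G (2 * ε ^ 2) X

/-- Number of ordered pairs `(u,v) ∈ U × U` with `u ≠ v` and `{u,v} ∈ E`. -/
noncomputable def epairs {V : Type*} (G : SimpleGraph V) (U : Finset V) : ℕ :=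
  ((U ×ˢ U).filter fun p => p.1 ≠ p.2 ∧ G.Adj p.1 p.2).card

/-!
A vertex `v ∈ T_ε(X)` lies in `K = K_{2ε²}(X)` and in `K_ε(K)`, so it misses at most `ε|K| ≤ εn`
vertices of `K`, one of which is `v` itself. As `T_ε(X) ⊆ K`, every vertex of `T_ε(X)` has at most
`εn - 1` non-neighbours in `T_ε(X)` other than itself, and summing over `T_ε(X)` bounds the number
of missing ordered pairs by `t (εn - 1)`. This leaves at least `t (t - εn)` edges, which is at
least `(t - εn)(t - 1)` when `t ≥ εn`; otherwise the claimed bound is not positive.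
-/

namespace SimpleGraph

variable {V : Type*} (G : SimpleGraph V)

theorem epairs_add_sum_card_nonadj (U : Finset V) :
    epairs G U + ∑ v ∈ U, #{u ∈ U | v ≠ u ∧ ¬G.Adj v u} = #U.offDiag := by
  have hmiss : ∑ v ∈ U, #{u ∈ U | v ≠ u ∧ ¬G.Adj v u} =
      #{p ∈ U ×ˢ U | p.1 ≠ p.2 ∧ ¬G.Adj p.1 p.2} := by
    simp only [card_filter, sum_product]
  have hoff : U.offDiag = {p ∈ U ×ˢ U | p.1 ≠ p.2} := by
    ext p
    simp [and_assoc]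
  rw [hmiss, hoff, epairs, ← card_filter_add_card_filter_not (s := {p ∈ U ×ˢ U | p.1 ≠ p.2})
    (fun p => G.Adj p.1 p.2), filter_filter, filter_filter]

theorem le_epairs_of_card_nonadj_lt (U : Finset V) (d : ℝ)
    (hd : ∀ v ∈ U, (#{u ∈ U | v ≠ u ∧ ¬G.Adj v u} : ℝ) + 1 ≤ d) :
    (1 - d / #U) * #U * (#U - 1) ≤ (epairs G U : ℝ) := by
  rcases U.eq_empty_or_nonempty with rfl | hU
  · simp
  have ht : (1 : ℝ) ≤ #U := by exact_mod_cast hU.card_pos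
  have hsplit : (epairs G U : ℝ) + ∑ v ∈ U, (#{u ∈ U | v ≠ u ∧ ¬G.Adj v u} : ℝ) =
      #U * (#U - 1) := by
    rw [← Nat.cast_sum, ← Nat.cast_add, epairs_add_sum_card_nonadj, offDiag_card,
      Nat.cast_sub (Nat.le_mul_self _)]
    push_cast
    ring
  have hsum : ∑ v ∈ U, (#{u ∈ U | v ≠ u ∧ ¬G.Adj v u} : ℝ) ≤ #U * (d - 1) := by
    simpa [mul_sub] using sum_le_sum fun v hv => le_sub_iff_add_le.mpr (hd v hv)
  rw [one_sub_div (by positivity), div_mul_cancel₀ _ (by positivity)]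
  rcases le_total d #U with hdt | htd
  · nlinarith
  · nlinarith [(epairs G U).cast_nonneg (α := ℝ)]

theorem card_nonadj_add_one_le_of_mem_Knear [Fintype V] {α : ℝ} {Y T : Finset V} {v : V}
    (hTY : T ⊆ Y) (hvY : v ∈ Y) (hv : v ∈ Knear G α Y) :
    (#{u ∈ T | v ≠ u ∧ ¬G.Adj v u} : ℝ) + 1 ≤ α * #Y := by
  have hadj : (1 - α) * #Y ≤ (#{u ∈ Y | G.Adj v u} : ℝ) := by
    simpa [Knear] using hv
  have hsplit : (#{u ∈ Y | G.Adj v u} : ℝ) + #{u ∈ Y | ¬G.Adj v u} = #Y := by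
    exact_mod_cast card_filter_add_card_filter_not _
  have hsub : insert v {u ∈ T | v ≠ u ∧ ¬G.Adj v u} ⊆ {u ∈ Y | ¬G.Adj v u} := by
    intro u hu
    rcases mem_insert.mp hu with rfl | hu
    · simp [hvY]
    · simp only [mem_filter] at hu ⊢
      exact ⟨hTY hu.1, hu.2.2⟩
  have hcard : (#{u ∈ T | v ≠ u ∧ ¬G.Adj v u} : ℝ) + 1 ≤ #{u ∈ Y | ¬G.Adj v u} := by
    have := card_le_card hsub
    rw [card_insert_of_notMem (by simp)] at this
    exact_mod_cast this
  linarith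

end SimpleGraph

theorem Tnear_is_near_clique_general {V : Type*} [Fintype V] (G : SimpleGraph V)
    (ε : ℝ) (hε0 : 0 ≤ ε) (X : Finset V) :
    (epairs G (Tnear G ε X) : ℝ) ≥
      (1 - ((Fintype.card V : ℝ) * ε) / ((Tnear G ε X).card : ℝ)) *
        ((Tnear G ε X).card : ℝ) * (((Tnear G ε X).card : ℝ) - 1) := by
  refine G.le_epairs_of_card_nonadj_lt _ _ fun v hv => ?_
  obtain ⟨hvKK, hvK⟩ := mem_inter.mp hv
  have hKn : (#(Knear G (2 * ε ^ 2) X) : ℝ) ≤ Fintype.card V := by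
    exact_mod_cast card_le_univ _
  calc _ ≤ ε * #(Knear G (2 * ε ^ 2) X) :=
        G.card_nonadj_add_one_le_of_mem_Knear inter_subset_right hvK hvKK
    _ ≤ ε * Fintype.card V := mul_le_mul_of_nonneg_left hKn hε0
    _ = _ := mul_comm _ _

/-- For any `X ⊆ V` and `0 ≤ ε ≤ 1`, with `t = |T_ε(X)|`, the set `T_ε(X)` is an
`(nε/t)`-near clique. -/
theorem Tnear_is_near_clique {V : Type*} [Fintype V] (G : SimpleGraph V)
    (ε : ℝ) (hε0 : 0 ≤ ε) (hε1 : ε ≤ 1) (X : Finset V) :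
    (epairs G (Tnear G ε X) : ℝ) ≥
      (1 - ((Fintype.card V : ℝ) * ε) / ((Tnear G ε X).card : ℝ)) *
        ((Tnear G ε X).card : ℝ) * (((Tnear G ε X).card : ℝ) - 1) :=
  Tnear_is_near_clique_general G ε hε0 X
end

section
/- If D is an ε³-near clique and C = K_{ε²}(D) ∩ D, then |C| ≥ (1−ε)|D| − 1/ε². -/
open Finset
open scoped Classical

/-!
Let `B = D \ K_{ε²}(D)`. Summing the in-`D` degrees over `D`, every vertex contributes at most
`|D| - 1` and every vertex of `B` at least `ε²|D| - 1` less, so the near-clique bound gives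
`|B| (ε²|D| - 1) ≤ ε³ |D| (|D| - 1)`, i.e. `|B| ≤ ε|D| + 1/ε²`.
-/

theorem mem_Knear {V : Type*} [Fintype V] {G : SimpleGraph V} {α : ℝ} {X : Finset V} {v : V} :
    v ∈ Knear G α X ↔ (1 - α) * (X.card : ℝ) ≤ ((X.filter fun u => G.Adj v u).card : ℝ) := by
  simp [Knear]

theorem epairs_eq_sum_card_filter_adj {V : Type*} (G : SimpleGraph V) (U : Finset V) :
    epairs G U = ∑ v ∈ U, (U.filter fun u => G.Adj v u).card := by
  simp only [epairs, card_filter, sum_product]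
  refine sum_congr rfl fun v _ => sum_congr rfl fun u _ => ?_
  by_cases h : G.Adj v u
  · simp [h, G.ne_of_adj h]
  · simp [h]

theorem card_filter_adj_le_card_sub_one {V : Type*} (G : SimpleGraph V) {U : Finset V} {v : V}
    (hv : v ∈ U) : ((U.filter fun u => G.Adj v u).card : ℝ) ≤ U.card - 1 := by
  have hlt : (U.filter fun u => G.Adj v u).card < U.card :=
    card_lt_card (filter_ssubset.mpr ⟨v, hv, G.irrefl⟩)
  rw [le_sub_iff_add_le]
  exact_mod_cast hlt

theorem card_sdiff_Knear_mul_le {V : Type*} [Fintype V] (G : SimpleGraph V) (α : ℝ)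
    (U : Finset V) :
    ((U \ Knear G α U).card : ℝ) * (α * U.card - 1) ≤
      (U.card : ℝ) * (U.card - 1) - epairs G U := by
  set K := Knear G α U
  have hdeg : ∀ v ∈ U, ((U.filter fun u => G.Adj v u).card : ℝ) ≤
      (U.card - 1) - if v ∈ K then 0 else α * U.card - 1 := by
    intro v hv
    split_ifs with hvK
    · simpa using card_filter_adj_le_card_sub_one G hv
    · have := mem_Knear.not.mp hvK
      linarith
  have hsum := sum_le_sum hdeg
  rw [← Nat.cast_sum, ← epairs_eq_sum_card_filter_adj, sum_sub_distrib, sum_const,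
    sum_ite, sum_const_zero, sum_const, filter_notMem_eq_sdiff] at hsum
  simp only [nsmul_eq_mul, zero_add] at hsum
  linarith

theorem le_mul_add_one_div_sq_of_mul_le {ε n b : ℝ} (hε : 0 < ε) (hb : 0 ≤ b) (hbn : b ≤ n)
    (h : b * (ε ^ 2 * n - 1) ≤ ε ^ 3 * (n * (n - 1))) : b ≤ ε * n + 1 / ε ^ 2 := by
  rcases (hb.trans hbn).eq_or_lt with hn | hn
  · have hb0 : b = 0 := by linarith
    rw [hb0, ← hn]
    positivity
  · have key : ε ^ 2 * b ≤ ε ^ 3 * n + 1 := by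
      refine le_of_mul_le_mul_right ?_ hn
      nlinarith [pow_pos hε 3]
    rw [← mul_le_mul_iff_right₀ (pow_pos hε 2)]
    calc ε ^ 2 * b ≤ ε ^ 3 * n + 1 := key
      _ = ε ^ 2 * (ε * n + 1 / ε ^ 2) := by field_simp

/-- If `D` is an `ε³`-near clique and `C = K_{ε²}(D) ∩ D`,
then `|C| ≥ (1−ε)|D| − 1/ε²`. -/
theorem card_C_lower_bound {V : Type*} [Fintype V] (G : SimpleGraph V)
    (ε : ℝ) (hε : 0 < ε) (D : Finset V)
    (hD : (epairs G D : ℝ) ≥ (1 - ε ^ 3) * (D.card : ℝ) * ((D.card : ℝ) - 1)) :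
    (((Knear G (ε ^ 2) D ∩ D).card : ℝ)) ≥ (1 - ε) * (D.card : ℝ) - 1 / ε ^ 2 := by
  set B := D \ Knear G (ε ^ 2) D
  have hsplit : ((Knear G (ε ^ 2) D ∩ D).card : ℝ) + B.card = D.card := by
    rw [inter_comm]; exact_mod_cast card_inter_add_card_sdiff D _
  have hB : (B.card : ℝ) ≤ ε * D.card + 1 / ε ^ 2 := by
    refine le_mul_add_one_div_sq_of_mul_le hε (Nat.cast_nonneg _)
      (by exact_mod_cast card_le_card sdiff_subset) ?_
    have := card_sdiff_Knear_mul_le G (ε ^ 2) D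
    linarith
  linarith
end

section
/- If every vertex of D \ C has fewer than (1−ε²)|D| neighbors in D, every vertex has at most |D| neighbors in D, C ⊆ D, and |C| < (1−ε)|D| − 1/ε², then the number of ordered pairs (u,v) ∈ D×D with {u,v} an edge is strictly less than (1−ε³)|D|² − |D|. -/
open Finset
open scoped Classical

/-- If every vertex of `D \ C` has fewer than `(1−ε²)|D|` neighbors in `D`, every
vertex has at most `|D|` neighbors in `D`, `C ⊆ D`, and `|C| < (1−ε)|D| − 1/ε²`,
then the number of ordered adjacent pairs in `D × D` is less than
`(1−ε³)|D|² − |D|`. -/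
theorem epairs_upper_of_small_C {V : Type*} [Fintype V] (G : SimpleGraph V)
    (ε : ℝ) (hε : 0 < ε) (D C : Finset V)
    (hsmall : ∀ v ∈ D \ C,
      (((D.filter fun u => G.Adj v u).card : ℝ)) < (1 - ε ^ 2) * (D.card : ℝ))
    (hub : ∀ v : V, (((D.filter fun u => G.Adj v u).card : ℝ)) ≤ (D.card : ℝ))
    (hCD : C ⊆ D)
    (hC : (C.card : ℝ) < (1 - ε) * (D.card : ℝ) - 1 / ε ^ 2) :
    (epairs G D : ℝ) < (1 - ε ^ 3) * (D.card : ℝ) ^ 2 - (D.card : ℝ) := by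
  classical
  set n : ℝ := (D.card : ℝ) with hn
  have hn0 : (0:ℝ) ≤ n := Nat.cast_nonneg _
  have hC0 : (0:ℝ) ≤ (C.card : ℝ) := Nat.cast_nonneg _
  have hinvpos : 0 < 1 / ε ^ 2 := by positivity
  have hprodpos : 0 < (1 - ε) * n := by linarith
  have hnpos : 0 < n := by
    by_contra h
    push_neg at h
    have hne : n = 0 := le_antisymm h hn0
    rw [hne, mul_zero] at hprodpos
    exact lt_irrefl 0 hprodpos
  have hε1 : ε < 1 := by nlinarith
  -- rewrite epairs as a sum of degrees
  have keyN : epairs G D = ∑ v ∈ D, (D.filter fun u => G.Adj v u).card := by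
    unfold epairs
    rw [show ((D ×ˢ D).filter fun p => p.1 ≠ p.2 ∧ G.Adj p.1 p.2)
        = (D ×ˢ D).filter fun p => G.Adj p.1 p.2 from
      filter_congr fun p _ => by
        constructor
        · exact fun h => h.2
        · exact fun h => ⟨h.ne, h⟩]
    rw [Finset.card_filter, Finset.sum_product]
    exact Finset.sum_congr rfl fun v _ => (Finset.card_filter _ _).symm
  have key : (epairs G D : ℝ) = ∑ v ∈ D, ((D.filter fun u => G.Adj v u).card : ℝ) := by
    rw [keyN]; push_cast; rfl
  have hsplit : (epairs G D : ℝ)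
      = ∑ v ∈ D \ C, ((D.filter fun u => G.Adj v u).card : ℝ)
        + ∑ v ∈ C, ((D.filter fun u => G.Adj v u).card : ℝ) := by
    rw [key, ← Finset.sum_sdiff hCD]
  have hbound1 : ∑ v ∈ C, ((D.filter fun u => G.Adj v u).card : ℝ)
      ≤ (C.card : ℝ) * n := by
    calc ∑ v ∈ C, ((D.filter fun u => G.Adj v u).card : ℝ)
        ≤ ∑ _v ∈ C, n := Finset.sum_le_sum fun v _ => hub v
      _ = (C.card : ℝ) * n := by rw [Finset.sum_const, nsmul_eq_mul]
  have hbound2 : ∑ v ∈ D \ C, ((D.filter fun u => G.Adj v u).card : ℝ)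
      ≤ ((D \ C).card : ℝ) * ((1 - ε ^ 2) * n) := by
    calc ∑ v ∈ D \ C, ((D.filter fun u => G.Adj v u).card : ℝ)
        ≤ ∑ _v ∈ D \ C, (1 - ε ^ 2) * n :=
          Finset.sum_le_sum fun v hv => (hsmall v hv).le
      _ = ((D \ C).card : ℝ) * ((1 - ε ^ 2) * n) := by
          rw [Finset.sum_const, nsmul_eq_mul]
  have hcardsdiff : ((D \ C).card : ℝ) = n - (C.card : ℝ) := by
    rw [Finset.card_sdiff_of_subset hCD]
    push_cast [Finset.card_le_card hCD]
    rfl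
  rw [hcardsdiff] at hbound2
  have hmul : ε ^ 2 * (1 / ε ^ 2) = 1 := by field_simp
  have hCmul : (C.card : ℝ) * (ε ^ 2 * n)
      < ((1 - ε) * n - 1 / ε ^ 2) * (ε ^ 2 * n) :=
    mul_lt_mul_of_pos_right hC (by positivity)
  nlinarith [hbound1, hbound2, hsplit, hCmul, hmul, hnpos]
end

section
/- Let C and Z be finite vertex sets with all but at most ε²|C| vertices of Z having at least (1−3ε²)|C| neighbors in C, and suppose |Z| ≥ (2/3)|C|. Let Y be the set of vertices of C having fewer than (1−ε)|Z| neighbors in Z. Then |Y| ≤ (9ε/2)|C|. -/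
open Finset
open scoped Classical

/-- If all but at most `ε²|C|` vertices of `Z` have at least `(1−3ε²)|C|` neighbors
in `C`, and `|Z| ≥ (2/3)|C|`, then the set `Y` of vertices of `C` having fewer than
`(1−ε)|Z|` neighbors in `Z` satisfies `|Y| ≤ (9ε/2)|C|`. -/
theorem few_low_degree_vertices {V : Type*} [Fintype V] (G : SimpleGraph V)
    (ε : ℝ) (hε : 0 < ε) (hε3 : ε ≤ 1 / 3) (C Z : Finset V)
    (hbad : (((Z.filter fun z =>
        (((C.filter fun u => G.Adj z u).card : ℝ)) < (1 - 3 * ε ^ 2) * (C.card : ℝ)).card : ℝ))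
      ≤ ε ^ 2 * (C.card : ℝ))
    (hZ : (Z.card : ℝ) ≥ (2 / 3) * (C.card : ℝ)) :
    (((C.filter fun v =>
        (((Z.filter fun u => G.Adj v u).card : ℝ)) < (1 - ε) * (Z.card : ℝ)).card : ℝ))
      ≤ (9 * ε / 2) * (C.card : ℝ) := by
  classical
  set Y := C.filter fun v =>
      (((Z.filter fun u => G.Adj v u).card : ℝ)) < (1 - ε) * (Z.card : ℝ) with hYdef
  set B := Z.filter fun z =>
      (((C.filter fun u => G.Adj z u).card : ℝ)) < (1 - 3 * ε ^ 2) * (C.card : ℝ) with hBdef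
  -- counting nonedges both ways
  have hswap : ∑ v ∈ C, (((Z.filter fun u => ¬ G.Adj v u).card : ℝ))
      = ∑ z ∈ Z, (((C.filter fun u => ¬ G.Adj z u).card : ℝ)) := by
    have h1 : ∀ v ∈ C, (((Z.filter fun u => ¬ G.Adj v u).card : ℝ))
        = ∑ u ∈ Z, (if ¬ G.Adj v u then (1:ℝ) else 0) := fun v _ => by
      rw [Finset.sum_boole]
    have h2 : ∀ z ∈ Z, (((C.filter fun u => ¬ G.Adj z u).card : ℝ))
        = ∑ u ∈ C, (if ¬ G.Adj z u then (1:ℝ) else 0) := fun z _ => by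
      rw [Finset.sum_boole]
    rw [Finset.sum_congr rfl h1, Finset.sum_congr rfl h2, Finset.sum_comm]
    refine Finset.sum_congr rfl fun z _ => Finset.sum_congr rfl fun v _ => ?_
    simp [G.adj_comm]
  -- complement cardinalities
  have hcompl : ∀ (W : Finset V) (v : V),
      (((W.filter fun u => ¬ G.Adj v u).card : ℝ))
        = (W.card : ℝ) - (((W.filter fun u => G.Adj v u).card : ℝ)) := by
    intro W v
    have := Finset.card_filter_add_card_filter_not
      (s := W) (p := fun u => G.Adj v u)
    push_cast [← this]; ring
  -- lower bound
  have hlow : ε * (Z.card : ℝ) * (Y.card : ℝ)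
      ≤ ∑ v ∈ C, (((Z.filter fun u => ¬ G.Adj v u).card : ℝ)) := by
    have hsub : Y ⊆ C := Finset.filter_subset _ _
    calc ε * (Z.card : ℝ) * (Y.card : ℝ)
        = ∑ _v ∈ Y, ε * (Z.card : ℝ) := by rw [Finset.sum_const]; push_cast; ring
      _ ≤ ∑ v ∈ Y, (((Z.filter fun u => ¬ G.Adj v u).card : ℝ)) := by
          refine Finset.sum_le_sum fun v hv => ?_
          rw [hYdef, Finset.mem_filter] at hv
          rw [hcompl]
          nlinarith [hv.2]
      _ ≤ ∑ v ∈ C, (((Z.filter fun u => ¬ G.Adj v u).card : ℝ)) := by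
          refine Finset.sum_le_sum_of_subset_of_nonneg hsub fun v _ _ => by positivity
  -- upper bound
  have hup : ∑ z ∈ Z, (((C.filter fun u => ¬ G.Adj z u).card : ℝ))
      ≤ ε ^ 2 * (C.card : ℝ) * (C.card : ℝ) + 3 * ε ^ 2 * (C.card : ℝ) * (Z.card : ℝ) := by
    have hsplit := Finset.sum_filter_add_sum_filter_not Z
      (fun z => (((C.filter fun u => G.Adj z u).card : ℝ)) < (1 - 3 * ε ^ 2) * (C.card : ℝ))
      (fun z => (((C.filter fun u => ¬ G.Adj z u).card : ℝ)))
    rw [← hsplit, ← hBdef]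
    have hB1 : ∑ z ∈ B, (((C.filter fun u => ¬ G.Adj z u).card : ℝ))
        ≤ ε ^ 2 * (C.card : ℝ) * (C.card : ℝ) := by
      calc ∑ z ∈ B, (((C.filter fun u => ¬ G.Adj z u).card : ℝ))
          ≤ ∑ _z ∈ B, (C.card : ℝ) := by
            refine Finset.sum_le_sum fun z _ => ?_
            exact_mod_cast Finset.card_le_card (Finset.filter_subset _ _)
        _ = (B.card : ℝ) * (C.card : ℝ) := by rw [Finset.sum_const]; push_cast; ring
        _ ≤ ε ^ 2 * (C.card : ℝ) * (C.card : ℝ) := by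
            have hC0 : (0:ℝ) ≤ (C.card : ℝ) := by positivity
            nlinarith [hbad]
    have hB2 : ∑ z ∈ Z.filter (fun z => ¬ ((((C.filter fun u => G.Adj z u).card : ℝ))
          < (1 - 3 * ε ^ 2) * (C.card : ℝ))), (((C.filter fun u => ¬ G.Adj z u).card : ℝ))
        ≤ 3 * ε ^ 2 * (C.card : ℝ) * (Z.card : ℝ) := by
      calc ∑ z ∈ Z.filter (fun z => ¬ ((((C.filter fun u => G.Adj z u).card : ℝ))
            < (1 - 3 * ε ^ 2) * (C.card : ℝ))), (((C.filter fun u => ¬ G.Adj z u).card : ℝ))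
          ≤ ∑ _z ∈ Z.filter (fun z => ¬ ((((C.filter fun u => G.Adj z u).card : ℝ))
            < (1 - 3 * ε ^ 2) * (C.card : ℝ))), 3 * ε ^ 2 * (C.card : ℝ) := by
            refine Finset.sum_le_sum fun z hz => ?_
            rw [Finset.mem_filter, not_lt] at hz
            rw [hcompl]
            nlinarith [hz.2]
        _ ≤ (Z.card : ℝ) * (3 * ε ^ 2 * (C.card : ℝ)) := by
            rw [Finset.sum_const, nsmul_eq_mul]
            have : ((Z.filter fun z => ¬ ((((C.filter fun u => G.Adj z u).card : ℝ))
                < (1 - 3 * ε ^ 2) * (C.card : ℝ))).card : ℝ) ≤ (Z.card : ℝ) := by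
              exact_mod_cast Finset.card_filter_le Z _
            nlinarith [this, sq_nonneg ε, (Nat.cast_nonneg C.card : (0:ℝ) ≤ (C.card : ℝ))]
        _ = 3 * ε ^ 2 * (C.card : ℝ) * (Z.card : ℝ) := by ring
    linarith
  have hkey : ε * (Z.card : ℝ) * (Y.card : ℝ)
      ≤ ε ^ 2 * (C.card : ℝ) * (C.card : ℝ) + 3 * ε ^ 2 * (C.card : ℝ) * (Z.card : ℝ) := by
    calc ε * (Z.card : ℝ) * (Y.card : ℝ) ≤ _ := hlow
      _ = _ := hswap
      _ ≤ _ := hup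
  -- finish
  have hYC : (Y.card : ℝ) ≤ (C.card : ℝ) :=
    by exact_mod_cast Finset.card_le_card (Finset.filter_subset _ _)
  by_cases hC : C.card = 0
  · have : (Y.card : ℝ) ≤ 0 := by rw [hC] at hYC; exact_mod_cast hYC
    have h0 : (0:ℝ) ≤ (9 * ε / 2) * (C.card : ℝ) := by positivity
    linarith
  · have hCpos : (0:ℝ) < (C.card : ℝ) := by
      exact_mod_cast Nat.pos_of_ne_zero hC
    have hZpos : (0:ℝ) < (Z.card : ℝ) := by nlinarith
    have hY0 : (0:ℝ) ≤ (Y.card : ℝ) := Nat.cast_nonneg _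
    nlinarith [hkey, mul_pos hε hZpos]
end

section
/- If v ∈ K_{ε²}(D), C = K_{ε²}(D) ∩ D, and |C| ≥ (1−ε)|D| with ε ≤ 1/3, then |Γ(v) ∩ C| ≥ (1 − (3/2)ε²)|C|. -/
open Finset
open scoped Classical

/-- If `v ∈ K_{ε²}(D)`, `C = K_{ε²}(D) ∩ D`, and `|C| ≥ (1−ε)|D|` with `ε ≤ 1/3`,
then `|Γ(v) ∩ C| ≥ (1 − (3/2)ε²)|C|`. -/
theorem neighbors_in_C_lower {V : Type*} [Fintype V] (G : SimpleGraph V)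
    (ε : ℝ) (hε : 0 < ε) (hε3 : ε ≤ 1 / 3) (D C : Finset V) (hD : D.Nonempty)
    (v : V) (hv : v ∈ Knear G (ε ^ 2) D)
    (hCdef : C = Knear G (ε ^ 2) D ∩ D)
    (hCcard : (C.card : ℝ) ≥ (1 - ε) * (D.card : ℝ)) :
    (((C.filter fun u => G.Adj v u).card : ℝ)) ≥ (1 - (3 / 2) * ε ^ 2) * (C.card : ℝ) := by

  have hvD : (1 - ε ^ 2) * (D.card : ℝ) ≤ ((D.filter fun u => G.Adj v u).card : ℝ) := by
    simpa [Knear] using hv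
  have hCD : C ⊆ D := by rw [hCdef]; exact inter_subset_right
  have hsub : C.filter (fun u => ¬ G.Adj v u) ⊆ D.filter (fun u => ¬ G.Adj v u) :=
    filter_subset_filter _ hCD
  have h1 := card_filter_add_card_filter_not (s := C) (p := fun u => G.Adj v u)
  have h2 := card_filter_add_card_filter_not (s := D) (p := fun u => G.Adj v u)
  have hle : ((C.filter fun u => ¬ G.Adj v u).card : ℝ) ≤ ((D.filter fun u => ¬ G.Adj v u).card : ℝ) := by
    exact_mod_cast card_le_card hsub
  have h1' : ((C.filter fun u => G.Adj v u).card : ℝ) + ((C.filter fun u => ¬ G.Adj v u).card : ℝ) = (C.card : ℝ) := by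
    exact_mod_cast h1
  have h2' : ((D.filter fun u => G.Adj v u).card : ℝ) + ((D.filter fun u => ¬ G.Adj v u).card : ℝ) = (D.card : ℝ) := by
    exact_mod_cast h2
  have hDpos : (0 : ℝ) < (D.card : ℝ) := by
    exact_mod_cast Finset.card_pos.mpr hD
  nlinarith [sq_nonneg ε, mul_nonneg (mul_nonneg hε.le hε.le) hDpos.le,
    mul_le_mul_of_nonneg_left hε3 (mul_nonneg (mul_nonneg hε.le hε.le) hDpos.le)]
end

section
/- In the graph G_n consisting of cliques C₁, C₂ of size δn/2 each and independent sets I₁, I₂ of size (1−δ)n/2 each, with complete bipartite connections between the pairs (I₁,C₁), (C₁,C₂), (C₂,I₂), the density of the set C₁ ∪ C₂ ∪ I₁ equals 2δ/(1+δ); in particular, for ε < (1−δ)/(1+δ), this set is not an ε-near clique. -/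
open Finset
open scoped Classical

set_option maxHeartbeats 1000000 in
/-- In the graph `G_n` built from cliques `C₁, C₂` of size `δn/2` and independent
sets `I₁, I₂` of size `(1−δ)n/2`, with complete bipartite connections between
`(I₁,C₁)`, `(C₁,C₂)`, `(C₂,I₂)`, the density of `C₁ ∪ C₂ ∪ I₁` equals `2δ/(1+δ)`;
in particular for `ε < (1−δ)/(1+δ)` this set is not an `ε`-near clique. -/
theorem shingles_candidate_density {V : Type*} [Fintype V] [DecidableEq V]
    (G : SimpleGraph V) (δ : ℝ) (n : ℕ) (hδ0 : 0 < δ) (hδ1 : δ < 1) (hn : 0 < n)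
    (hneven : Even n)
    (C1 C2 I1 I2 : Finset V)
    (hC1 : (C1.card : ℝ) = δ * n / 2) (hC2 : (C2.card : ℝ) = δ * n / 2)
    (hI1 : (I1.card : ℝ) = (1 - δ) * n / 2) (hI2 : (I2.card : ℝ) = (1 - δ) * n / 2)
    (hd12 : Disjoint C1 C2) (hd1I1 : Disjoint C1 I1) (hd1I2 : Disjoint C1 I2)
    (hd2I1 : Disjoint C2 I1) (hd2I2 : Disjoint C2 I2) (hdI : Disjoint I1 I2)
    (hcover : C1 ∪ C2 ∪ I1 ∪ I2 = Finset.univ)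
    (hadj : ∀ u v : V, G.Adj u v ↔ u ≠ v ∧
      ((u ∈ C1 ∪ C2 ∧ v ∈ C1 ∪ C2) ∨ (u ∈ I1 ∧ v ∈ C1) ∨ (u ∈ C1 ∧ v ∈ I1) ∨
        (u ∈ C2 ∧ v ∈ I2) ∨ (u ∈ I2 ∧ v ∈ C2))) :
    (epairs G (C1 ∪ C2 ∪ I1) : ℝ) /
        (((C1 ∪ C2 ∪ I1).card : ℝ) * (((C1 ∪ C2 ∪ I1).card : ℝ) - 1)) =
      2 * δ / (1 + δ) ∧
    ∀ ε : ℝ, 0 ≤ ε → ε < (1 - δ) / (1 + δ) →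
      (epairs G (C1 ∪ C2 ∪ I1) : ℝ) /
          (((C1 ∪ C2 ∪ I1).card : ℝ) * (((C1 ∪ C2 ∪ I1).card : ℝ) - 1)) < 1 - ε := by
  classical
  have h1d : (0:ℝ) < 1 + δ := by linarith
  have hnR : (0:ℝ) < (n:ℝ) := by exact_mod_cast hn
  have hset : (((C1 ∪ C2 ∪ I1) ×ˢ (C1 ∪ C2 ∪ I1)).filter
        fun p => p.1 ≠ p.2 ∧ G.Adj p.1 p.2)
      = (C1 ∪ C2).offDiag ∪ (I1 ×ˢ C1) ∪ (C1 ×ˢ I1) := by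
    ext ⟨u, v⟩
    constructor
    · intro hp
      rw [Finset.mem_filter] at hp
      obtain ⟨hmem, hne, hadj'⟩ := hp
      rw [Finset.mem_product] at hmem
      obtain ⟨hu, hv⟩ := hmem
      rw [hadj] at hadj'
      rw [Finset.mem_union, Finset.mem_union, Finset.mem_offDiag,
        Finset.mem_product, Finset.mem_product]
      rcases hadj'.2 with ⟨h1, h2⟩ | ⟨h1, h2⟩ | ⟨h1, h2⟩ | ⟨h1, h2⟩ | ⟨h1, h2⟩
      · exact Or.inl (Or.inl ⟨h1, h2, hne⟩)
      · exact Or.inl (Or.inr ⟨h1, h2⟩)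
      · exact Or.inr ⟨h1, h2⟩
      · exfalso
        rw [Finset.mem_union, Finset.mem_union] at hv
        rcases hv with (hv | hv) | hv
        · exact Finset.disjoint_left.mp hd1I2 hv h2
        · exact Finset.disjoint_left.mp hd2I2 hv h2
        · exact Finset.disjoint_left.mp hdI hv h2
      · exfalso
        rw [Finset.mem_union, Finset.mem_union] at hu
        rcases hu with (hu | hu) | hu
        · exact Finset.disjoint_left.mp hd1I2 hu h1
        · exact Finset.disjoint_left.mp hd2I2 hu h1
        · exact Finset.disjoint_left.mp hdI hu h1
    · intro hp
      rw [Finset.mem_union, Finset.mem_union, Finset.mem_offDiag,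
        Finset.mem_product, Finset.mem_product] at hp
      rw [Finset.mem_filter, Finset.mem_product]
      rcases hp with (⟨h1, h2, hne⟩ | ⟨h1, h2⟩) | ⟨h1, h2⟩
      · refine ⟨⟨?_, ?_⟩, hne, ?_⟩
        · rw [Finset.mem_union]; exact Or.inl h1
        · rw [Finset.mem_union]; exact Or.inl h2
        · rw [hadj]; exact ⟨hne, Or.inl ⟨h1, h2⟩⟩
      · have hne : u ≠ v := by
          rintro rfl
          exact Finset.disjoint_left.mp hd1I1 h2 h1
        refine ⟨⟨?_, ?_⟩, hne, ?_⟩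
        · rw [Finset.mem_union]; exact Or.inr h1
        · rw [Finset.mem_union, Finset.mem_union]; exact Or.inl (Or.inl h2)
        · rw [hadj]; exact ⟨hne, Or.inr (Or.inl ⟨h1, h2⟩)⟩
      · have hne : u ≠ v := by
          rintro rfl
          exact Finset.disjoint_left.mp hd1I1 h1 h2
        refine ⟨⟨?_, ?_⟩, hne, ?_⟩
        · rw [Finset.mem_union, Finset.mem_union]; exact Or.inl (Or.inl h1)
        · rw [Finset.mem_union]; exact Or.inr h2
        · rw [hadj]; exact ⟨hne, Or.inr (Or.inr (Or.inl ⟨h1, h2⟩))⟩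
  have hdisjC_I1 : Disjoint (C1 ∪ C2) I1 := by
    rw [Finset.disjoint_union_left]; exact ⟨hd1I1, hd2I1⟩
  have hd_a : Disjoint ((C1 ∪ C2).offDiag ∪ (I1 ×ˢ C1)) (C1 ×ˢ I1) := by
    rw [Finset.disjoint_left]
    rintro ⟨u, v⟩ hp hq
    simp only [Finset.mem_union, Finset.mem_offDiag, Finset.mem_product] at hp hq
    rcases hp with ⟨_, hv, _⟩ | ⟨hu, _⟩
    · rcases hv with hv | hv
      · exact Finset.disjoint_left.mp hd1I1 hv hq.2
      · exact Finset.disjoint_left.mp hd2I1 hv hq.2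
    · exact Finset.disjoint_left.mp hd1I1 hq.1 hu
  have hd_b : Disjoint ((C1 ∪ C2).offDiag) (I1 ×ˢ C1) := by
    rw [Finset.disjoint_left]
    rintro ⟨u, v⟩ hp hq
    simp only [Finset.mem_offDiag, Finset.mem_product] at hp hq
    rcases Finset.mem_union.mp hp.1 with hv | hv
    · exact Finset.disjoint_left.mp hd1I1 hv hq.1
    · exact Finset.disjoint_left.mp hd2I1 hv hq.1
  have hep : epairs G (C1 ∪ C2 ∪ I1)
      = ((C1 ∪ C2).card * (C1 ∪ C2).card - (C1 ∪ C2).card)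
        + I1.card * C1.card + C1.card * I1.card := by
    unfold epairs
    rw [Finset.filter_congr_decidable, hset,
      Finset.card_union_of_disjoint hd_a, Finset.card_union_of_disjoint hd_b,
      Finset.offDiag_card, Finset.card_product, Finset.card_product]
  have hCcard : ((C1 ∪ C2).card : ℝ) = δ * n := by
    rw [Finset.card_union_of_disjoint hd12]; push_cast
    rw [hC1, hC2]; ring
  have hUeq : (C1 ∪ C2 ∪ I1).card = (C1 ∪ C2).card + I1.card :=
    Finset.card_union_of_disjoint hdisjC_I1
  have hUcard : ((C1 ∪ C2 ∪ I1).card : ℝ) = (1 + δ) * n / 2 := by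
    rw [hUeq]; push_cast
    rw [hCcard, hI1]; ring
  have hCle : (C1 ∪ C2).card ≤ (C1 ∪ C2).card * (C1 ∪ C2).card :=
    Nat.le_mul_of_pos_left _ (by
      by_contra h
      push_neg at h
      have h0 : (C1 ∪ C2).card = 0 := by omega
      have h0R : ((C1 ∪ C2).card : ℝ) = 0 := by exact_mod_cast h0
      rw [Finset.card_union_of_disjoint hd12] at h0R
      push_cast at h0R
      rw [hC1, hC2] at h0R
      nlinarith)
  have hepR : (epairs G (C1 ∪ C2 ∪ I1) : ℝ) = δ * n * ((1 + δ) * n / 2 - 1) := by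
    rw [hep]
    push_cast [Nat.cast_sub hCle]
    rw [hCcard, hC1, hI1]; ring
  have hC1pos : 0 < C1.card := by
    have : (0:ℝ) < (C1.card : ℝ) := by rw [hC1]; positivity
    exact_mod_cast this
  have hC2pos : 0 < C2.card := by
    have : (0:ℝ) < (C2.card : ℝ) := by rw [hC2]; positivity
    exact_mod_cast this
  have hU2 : (2:ℝ) ≤ ((C1 ∪ C2 ∪ I1).card : ℝ) := by
    have h2 : 2 ≤ (C1 ∪ C2).card := by
      rw [Finset.card_union_of_disjoint hd12]; omega
    have h3 : (C1 ∪ C2 ∪ I1).card = (C1 ∪ C2).card + I1.card := hUeq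
    have : 2 ≤ (C1 ∪ C2 ∪ I1).card := by omega
    exact_mod_cast this
  have hden1 : (0:ℝ) < ((C1 ∪ C2 ∪ I1).card : ℝ) := by linarith
  have hden2 : (0:ℝ) < ((C1 ∪ C2 ∪ I1).card : ℝ) - 1 := by linarith
  have hmain : (epairs G (C1 ∪ C2 ∪ I1) : ℝ) /
      (((C1 ∪ C2 ∪ I1).card : ℝ) * (((C1 ∪ C2 ∪ I1).card : ℝ) - 1))
      = 2 * δ / (1 + δ) := by
    rw [hUcard] at hden1 hden2
    rw [hepR, hUcard]
    rw [div_eq_div_iff (mul_pos hden1 hden2).ne' h1d.ne']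
    ring
  refine ⟨hmain, fun ε hε0 hε => ?_⟩
  rw [hmain]
  rw [lt_div_iff₀ h1d] at hε
  rw [div_lt_iff₀ h1d]
  nlinarith
end

section
/- For any set X of vertices and 0 ≤ ε ≤ 1/2, every vertex v ∈ T_ε(X) has at least |T_ε(X)| − ε|K_{2ε²}(X)| neighbors inside T_ε(X) (excluding itself). -/
open Finset
open scoped Classical

/-- Every vertex `v ∈ T_ε(X)` has at least `|T_ε(X)| − ε|K_{2ε²}(X)|` neighbors
inside `T_ε(X)` (excluding itself). -/
theorem Tnear_min_degree {V : Type*} [Fintype V] [DecidableEq V] (G : SimpleGraph V)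
    (ε : ℝ) (hε0 : 0 ≤ ε) (hε : ε ≤ 1 / 2) (X : Finset V) (v : V)
    (hv : v ∈ Tnear G ε X) :
    ((((Tnear G ε X \ {v}).filter fun u => G.Adj v u).card : ℝ)) ≥
      ((Tnear G ε X).card : ℝ) - ε * ((Knear G (2 * ε ^ 2) X).card : ℝ) := by
  set K := Knear G (2 * ε ^ 2) X with hK
  set T := Tnear G ε X with hT
  have hvmem : v ∈ Knear G ε K ∧ v ∈ K := by
    simpa [hT, Tnear, Finset.mem_inter] using hv
  have hvK : v ∈ K := hvmem.2
  -- A : neighbors of v in K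
  set A := K.filter (fun u => G.Adj v u) with hA
  have hdeg : (1 - ε) * (K.card : ℝ) ≤ (A.card : ℝ) := by
    have := hvmem.1
    simpa [Knear, hA] using this
  -- v ∈ K \ A
  have hvKA : v ∈ K \ A := by
    simp [hA, hvK, Finset.mem_sdiff, Finset.mem_filter, G.irrefl]
  -- T ⊆ K
  have hTK : T ⊆ K := by
    intro u hu
    exact (Finset.mem_inter.1 (by simpa [hT, Tnear] using hu)).2
  -- nonadjacent in T\{v} is a subset of (K\A)\{v}
  have hsub : (T \ {v}).filter (fun u => ¬ G.Adj v u) ⊆ (K \ A) \ {v} := by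
    intro u hu
    simp only [Finset.mem_filter, Finset.mem_sdiff, Finset.mem_singleton] at hu ⊢
    exact ⟨⟨hTK hu.1.1, by simp [hA, hu.2]⟩, hu.1.2⟩
  have hcard1 : ((T \ {v}).filter (fun u => ¬ G.Adj v u)).card ≤ (K \ A).card - 1 := by
    have h1 : ((K \ A) \ {v}).card = (K \ A).card - 1 := by
      rw [Finset.card_sdiff_of_subset (by simpa using hvKA)]
      simp
    calc ((T \ {v}).filter (fun u => ¬ G.Adj v u)).card
        ≤ ((K \ A) \ {v}).card := Finset.card_le_card hsub
      _ = (K \ A).card - 1 := h1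
  have hAK : A ⊆ K := Finset.filter_subset _ _
  have hKA : (K \ A).card = K.card - A.card := Finset.card_sdiff_of_subset hAK
  have hsplit : ((T \ {v}).filter (fun u => G.Adj v u)).card
      = (T \ {v}).card - ((T \ {v}).filter (fun u => ¬ G.Adj v u)).card := by
    have := Finset.card_filter_add_card_filter_not (s := T \ {v}) (p := fun u => G.Adj v u)
    omega
  have hvT : v ∈ T := hv
  have hTv : (T \ {v}).card = T.card - 1 := by
    rw [Finset.card_sdiff_of_subset (by simpa using hvT)]; simp
  have hKApos : 1 ≤ (K \ A).card := Finset.card_pos.mpr ⟨v, hvKA⟩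
  have hAle : A.card ≤ K.card := Finset.card_le_card hAK
  have hTpos : 1 ≤ T.card := Finset.card_pos.mpr ⟨v, hvT⟩
  -- now push to ℝ
  have key : (T.card : ℝ) - ((K.card : ℝ) - A.card)
      ≤ (((T \ {v}).filter (fun u => G.Adj v u)).card : ℝ) := by
    rw [hsplit, hTv]
    have hle : ((T \ {v}).filter (fun u => ¬ G.Adj v u)).card ≤ T.card - 1 := by
      calc ((T \ {v}).filter (fun u => ¬ G.Adj v u)).card
          ≤ (T \ {v}).card := Finset.card_le_card (Finset.filter_subset _ _)
        _ = T.card - 1 := hTv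
    push_cast [Nat.cast_sub hle, Nat.cast_sub hTpos]
    have h1 : (((T \ {v}).filter (fun u => ¬ G.Adj v u)).card : ℝ)
        ≤ ((K \ A).card : ℝ) - 1 := by
      have := hcard1
      have h2 : (((K \ A).card - 1 : ℕ) : ℝ) = ((K \ A).card : ℝ) - 1 := by
        push_cast [Nat.cast_sub hKApos]; ring
      calc (((T \ {v}).filter (fun u => ¬ G.Adj v u)).card : ℝ)
          ≤ (((K \ A).card - 1 : ℕ) : ℝ) := by exact_mod_cast this
        _ = ((K \ A).card : ℝ) - 1 := h2
    have h3 : ((K \ A).card : ℝ) = (K.card : ℝ) - A.card := by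
      rw [hKA]; push_cast [Nat.cast_sub hAle]; ring
    linarith [h1, h3.le, h3.ge]
  have hfin : (K.card : ℝ) - (A.card : ℝ) ≤ ε * K.card := by nlinarith [hdeg]
  linarith [key, hfin]
end
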